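/- arXiv:0911.5655 — 7 statements merged into one kernel-verified Lean document; each statement's English description precedes it below -/
import Mathlib

section
/- Let W be a real vector space with a linear map J : W → W satisfying J² = −Id, and let μ : W × W → W be a skew-symmetric bilinear bracket. If μ satisfies the integrability condition μ(JX,JY) = μ(X,Y) + J μ(JX,Y) + J μ(X,JY) for all X,Y, then μ decomposes uniquely as μ = μ₁ + μ₂ where μ₁(JX,JY) = μ₁(X,Y) for all X,Y (abelian part) and μ₂(JX,Y) = J μ₂(X,Y) for all X,Y (bi-invariant part). -/
/-!
Write `μᴶ(x, y) = μ(Jx, Jy)`. Since `J² = -1`, the map `μ ↦ μᴶ` is an involution, so every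
bracket splits into its `+1` and `-1` eigenparts `μ₁ = (μ + μᴶ)/2` and `μ₂ = (μ - μᴶ)/2`. The
`+1` part is the abelian part by definition. For the `-1` part, the integrability condition reads
`μ - μᴶ = -J(μ(J·, ·) + μ(·, J·))`, which makes `μ₂(Jx, y) = J μ₂(x, y)`. Conversely a skew
bracket with `μ₂(Jx, y) = J μ₂(x, y)` satisfies `μ₂ᴶ = -μ₂`, so any decomposition is the
eigenspace decomposition, whence uniqueness.
-/

section

variable {K W : Type*} [Field K] [AddCommGroup W] [Module K W]

def abelianPart (J : W →ₗ[K] W) (μ : W →ₗ[K] W →ₗ[K] W) : W →ₗ[K] W →ₗ[K] W :=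
  (2⁻¹ : K) • (μ + μ.compl₁₂ J J)

def biinvariantPart (J : W →ₗ[K] W) (μ : W →ₗ[K] W →ₗ[K] W) : W →ₗ[K] W →ₗ[K] W :=
  (2⁻¹ : K) • (μ - μ.compl₁₂ J J)

variable {J : W →ₗ[K] W} {μ : W →ₗ[K] W →ₗ[K] W}

theorem abelianPart_apply (x y : W) :
    abelianPart J μ x y = (2⁻¹ : K) • (μ x y + μ (J x) (J y)) := rfl

theorem biinvariantPart_apply (x y : W) :
    biinvariantPart J μ x y = (2⁻¹ : K) • (μ x y - μ (J x) (J y)) := rfl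

theorem abelianPart_add_biinvariantPart [NeZero (2 : K)] :
    abelianPart J μ + biinvariantPart J μ = μ := by
  ext x y
  simp only [LinearMap.add_apply, abelianPart_apply, biinvariantPart_apply]
  match_scalars <;> field_simp <;> ring

theorem abelianPart_skew (hskew : ∀ x y, μ x y = -μ y x) (x y : W) :
    abelianPart J μ x y = -abelianPart J μ y x := by
  rw [abelianPart_apply, abelianPart_apply, hskew x y, hskew (J x) (J y)]
  module

theorem biinvariantPart_skew (hskew : ∀ x y, μ x y = -μ y x) (x y : W) :
    biinvariantPart J μ x y = -biinvariantPart J μ y x := by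
  rw [biinvariantPart_apply, biinvariantPart_apply, hskew x y, hskew (J x) (J y)]
  module

theorem abelianPart_apply_J_J (hJ : ∀ x, J (J x) = -x) (x y : W) :
    abelianPart J μ (J x) (J y) = abelianPart J μ x y := by
  simp only [abelianPart_apply, hJ, map_neg, LinearMap.neg_apply, neg_neg, add_comm]

theorem biinvariantPart_apply_J_left (hJ : ∀ x, J (J x) = -x)
    (hint : ∀ x y, μ (J x) (J y) = μ x y + J (μ (J x) y) + J (μ x (J y))) (x y : W) :
    biinvariantPart J μ (J x) y = J (biinvariantPart J μ x y) := by
  have hJint : J (μ (J x) (J y)) = J (μ x y) - μ (J x) y - μ x (J y) := by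
    rw [hint, map_add, map_add, hJ, hJ]
    abel
  simp only [biinvariantPart_apply, hJ, map_smul, map_sub, map_neg, LinearMap.neg_apply, hJint]
  module

theorem apply_J_J_of_apply_J_left {p : W →ₗ[K] W →ₗ[K] W} (hJ : ∀ x, J (J x) = -x)
    (hskew : ∀ x y, p x y = -p y x) (hlin : ∀ x y, p (J x) y = J (p x y)) (x y : W) :
    p (J x) (J y) = -p x y := by
  rw [hlin, hskew x (J y), map_neg, hlin, hJ, hskew y x, neg_neg]

theorem eq_parts_of_eq_add [NeZero (2 : K)] {p₁ p₂ : W →ₗ[K] W →ₗ[K] W} (hμ : μ = p₁ + p₂)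
    (h₁ : ∀ x y, p₁ (J x) (J y) = p₁ x y) (h₂ : ∀ x y, p₂ (J x) (J y) = -p₂ x y) :
    p₁ = abelianPart J μ ∧ p₂ = biinvariantPart J μ := by
  subst hμ
  constructor <;> ext x y <;>
    simp only [abelianPart_apply, biinvariantPart_apply, LinearMap.add_apply, h₁, h₂] <;>
    match_scalars <;> field_simp <;> ring

end

theorem integrable_decomposition_general
    (W : Type*) [AddCommGroup W] [Module ℝ W]
    (J : W →ₗ[ℝ] W) (hJ : ∀ x, J (J x) = -x)
    (μ : W →ₗ[ℝ] W →ₗ[ℝ] W) (hskew : ∀ x y, μ x y = -μ y x)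
    (hint : ∀ x y, μ (J x) (J y) = μ x y + J (μ (J x) y) + J (μ x (J y))) :
    ∃! p : (W →ₗ[ℝ] W →ₗ[ℝ] W) × (W →ₗ[ℝ] W →ₗ[ℝ] W),
      μ = p.1 + p.2 ∧
      (∀ x y, p.1 x y = -p.1 y x) ∧ (∀ x y, p.2 x y = -p.2 y x) ∧
      (∀ x y, p.1 (J x) (J y) = p.1 x y) ∧
      (∀ x y, p.2 (J x) y = J (p.2 x y)) := by
  refine ⟨(abelianPart J μ, biinvariantPart J μ),
    ⟨abelianPart_add_biinvariantPart.symm, abelianPart_skew hskew, biinvariantPart_skew hskew,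
      abelianPart_apply_J_J hJ, biinvariantPart_apply_J_left hJ hint⟩, ?_⟩
  rintro ⟨p₁, p₂⟩ ⟨hμ, -, hskew₂, h₁, hlin₂⟩
  obtain ⟨rfl, rfl⟩ := eq_parts_of_eq_add hμ h₁ (apply_J_J_of_apply_J_left hJ hskew₂ hlin₂)
  rfl

/-- decomposition of an integrable skew bracket into an abelian part
and a bi-invariant part, on a real vector space with a complex structure `J`. -/
theorem integrable_decomposition
    (W : Type*) [AddCommGroup W] [Module ℝ W] [FiniteDimensional ℝ W]
    (J : W →ₗ[ℝ] W) (hJ : ∀ x, J (J x) = -x)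
    (μ : W →ₗ[ℝ] W →ₗ[ℝ] W) (hskew : ∀ x y, μ x y = -μ y x)
    (hint : ∀ x y, μ (J x) (J y) = μ x y + J (μ (J x) y) + J (μ x (J y))) :
    ∃! p : (W →ₗ[ℝ] W →ₗ[ℝ] W) × (W →ₗ[ℝ] W →ₗ[ℝ] W),
      μ = p.1 + p.2 ∧
      (∀ x y, p.1 x y = -p.1 y x) ∧ (∀ x y, p.2 x y = -p.2 y x) ∧
      (∀ x y, p.1 (J x) (J y) = p.1 x y) ∧
      (∀ x y, p.2 (J x) y = J (p.2 x y)) :=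
  integrable_decomposition_general W J hJ μ hskew hint
end

section
/- Let W be a real vector space with J : W → W satisfying J² = −Id. Then every skew-symmetric bilinear bracket μ on W decomposes uniquely as a sum μ = μ_ab + μ_ℂ + μ_c where μ_ab(JX,JY) = μ_ab(X,Y), μ_ℂ(JX,Y) = J μ_ℂ(X,Y), and μ_c(JX,Y) = −J μ_c(X,Y) for all X,Y ∈ W. That is, V = V(ab) ⊕ V(ℂ) ⊕ V(anti-ℂ) as a direct sum of subspaces of Λ²(W*) ⊗ W. -/
/-!
On bilinear maps `μ : W × W → W` consider the two involutions `σ μ = μ (J ·) (J ·)` and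
`τ μ = -J ∘ μ (J ·) ·`. The abelian brackets are the `+1`-eigenvectors of `σ`, and the
bi-invariant and anti-bi-invariant ones the `+1`- and `-1`-eigenvectors of `τ`. A skew bracket
`μ` with `μ (J x) y = A (μ x y)` for some `A` with `A² = -1` (here `A = ±J`) satisfies `σ μ = -μ`, and `τ`
preserves skewness on the `-1`-eigenspace of `σ`. Hence splitting a skew bracket into
eigencomponents, first for `σ` and then the `σ`-odd part for `τ`, gives the unique decomposition.
-/

namespace Module.End

variable {R V : Type*} [CommRing R] [Invertible (2 : R)] [AddCommGroup V] [Module R V]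
  (s : Module.End R V)

def evenPart (v : V) : V := (⅟2 : R) • (v + s v)

def oddPart (v : V) : V := (⅟2 : R) • (v - s v)

theorem evenPart_add_oddPart (v : V) : s.evenPart v + s.oddPart v = v := by
  rw [evenPart, oddPart, ← smul_add, add_add_sub_cancel, ← two_smul R, smul_smul,
    invOf_mul_self, one_smul]

variable {s}

theorem evenPart_mem {p : Submodule R V} {v : V} (hv : v ∈ p) (hsv : s v ∈ p) :
    s.evenPart v ∈ p :=
  p.smul_mem _ (p.add_mem hv hsv)

theorem oddPart_mem {p : Submodule R V} {v : V} (hv : v ∈ p) (hsv : s v ∈ p) :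
    s.oddPart v ∈ p :=
  p.smul_mem _ (p.sub_mem hv hsv)

theorem apply_evenPart (hs : Function.Involutive s) (v : V) : s (s.evenPart v) = s.evenPart v := by
  rw [evenPart, map_smul, map_add, hs v, add_comm]

theorem apply_oddPart (hs : Function.Involutive s) (v : V) : s (s.oddPart v) = -s.oddPart v := by
  rw [oddPart, map_smul, map_sub, hs v, ← smul_neg, neg_sub]

theorem eq_evenPart_of_add_eq {v a b : V} (hv : a + b = v) (ha : s a = a) (hb : s b = -b) :
    a = s.evenPart v := by
  rw [evenPart, ← hv, map_add, ha, hb, add_add_add_comm, add_neg_cancel, add_zero, ← two_smul R,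
    smul_smul, invOf_mul_self, one_smul]

theorem eq_oddPart_of_add_eq {v a b : V} (hv : a + b = v) (ha : s a = a) (hb : s b = -b) :
    b = s.oddPart v := by
  rw [← add_right_inj (s.evenPart v), evenPart_add_oddPart, ← eq_evenPart_of_add_eq hv ha hb, hv]

end Module.End

namespace Bracket

open Module.End

variable {R W : Type*} [CommRing R] [AddCommGroup W] [Module R W] (J : W →ₗ[R] W)

variable (R W) in
def skew : Submodule R (W →ₗ[R] W →ₗ[R] W) where
  carrier := {μ | ∀ x y, μ x y = -μ y x}
  add_mem' {μ ν} hμ hν x y := by simp [hμ x y, hν x y, add_comm]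
  zero_mem' _ _ := by simp
  smul_mem' c μ hμ x y := by simp [hμ x y]

def abelianInvolution : Module.End R (W →ₗ[R] W →ₗ[R] W) where
  toFun μ := μ.compl₁₂ J J
  map_add' _ _ := rfl
  map_smul' _ _ := rfl

def complexInvolution : Module.End R (W →ₗ[R] W →ₗ[R] W) where
  toFun μ := -(μ ∘ₗ J).compr₂ J
  map_add' _ _ := by ext; simp [add_comm]
  map_smul' _ _ := by ext; simp

variable {J}

@[simp]
theorem abelianInvolution_apply (μ : W →ₗ[R] W →ₗ[R] W) (x y : W) :
    abelianInvolution J μ x y = μ (J x) (J y) :=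
  rfl

@[simp]
theorem complexInvolution_apply (μ : W →ₗ[R] W →ₗ[R] W) (x y : W) :
    complexInvolution J μ x y = -J (μ (J x) y) :=
  rfl

theorem abelianInvolution_involutive (hJ : ∀ x, J (J x) = -x) :
    Function.Involutive (abelianInvolution J) := by
  intro μ; ext x y; simp [hJ]

theorem complexInvolution_involutive (hJ : ∀ x, J (J x) = -x) :
    Function.Involutive (complexInvolution J) := by
  intro μ; ext x y; simp [hJ]

theorem abelianInvolution_eq_self_iff {μ : W →ₗ[R] W →ₗ[R] W} :
    abelianInvolution J μ = μ ↔ ∀ x y, μ (J x) (J y) = μ x y := by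
  simp [LinearMap.ext_iff]

theorem complexInvolution_eq_self_iff (hJ : ∀ x, J (J x) = -x) {μ : W →ₗ[R] W →ₗ[R] W} :
    complexInvolution J μ = μ ↔ ∀ x y, μ (J x) y = J (μ x y) := by
  simp only [LinearMap.ext_iff, complexInvolution_apply]
  refine forall₂_congr fun x y => ⟨fun h => ?_, fun h => ?_⟩
  · rw [← h, map_neg, hJ, neg_neg]
  · rw [h, hJ, neg_neg]

theorem complexInvolution_eq_neg_iff (hJ : ∀ x, J (J x) = -x) {μ : W →ₗ[R] W →ₗ[R] W} :
    complexInvolution J μ = -μ ↔ ∀ x y, μ (J x) y = -J (μ x y) := by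
  simp only [LinearMap.ext_iff, complexInvolution_apply, LinearMap.neg_apply, neg_inj]
  refine forall₂_congr fun x y => ⟨fun h => ?_, fun h => ?_⟩
  · rw [← h, hJ, neg_neg]
  · rw [h, map_neg, hJ, neg_neg]

theorem abelianInvolution_mem_skew {μ : W →ₗ[R] W →ₗ[R] W} (hμ : μ ∈ skew R W) :
    abelianInvolution J μ ∈ skew R W :=
  fun x y => hμ (J x) (J y)

theorem abelianInvolution_eq_neg_of_map_left {μ : W →ₗ[R] W →ₗ[R] W} (hμ : μ ∈ skew R W)
    {A : W →ₗ[R] W} (hA : ∀ w, A (A w) = -w) (hμA : ∀ x y, μ (J x) y = A (μ x y)) :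
    abelianInvolution J μ = -μ := by
  ext x y
  calc μ (J x) (J y) = A (-A (μ y x)) := by rw [hμA, hμ x, hμA]
    _ = -μ x y := by rw [map_neg, hA, neg_neg, hμ]

theorem complexInvolution_mem_skew (hJ : ∀ x, J (J x) = -x) {μ : W →ₗ[R] W →ₗ[R] W}
    (hμ : μ ∈ skew R W) (hσμ : abelianInvolution J μ = -μ) :
    complexInvolution J μ ∈ skew R W := by
  have hswap : ∀ x y, μ (J x) y = μ x (J y) := fun x y => by
    simpa [hJ] using congr($hσμ x (J y))
  intro x y
  simp only [complexInvolution_apply, hswap x, hμ x (J y), map_neg, neg_neg]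

end Bracket

open Bracket Module.End in
theorem full_decomposition_general
    (W : Type*) [AddCommGroup W] [Module ℝ W]
    (J : W →ₗ[ℝ] W) (hJ : ∀ x, J (J x) = -x)
    (μ : W →ₗ[ℝ] W →ₗ[ℝ] W) (hskew : ∀ x y, μ x y = -μ y x) :
    ∃! p : (W →ₗ[ℝ] W →ₗ[ℝ] W) × (W →ₗ[ℝ] W →ₗ[ℝ] W) × (W →ₗ[ℝ] W →ₗ[ℝ] W),
      μ = p.1 + p.2.1 + p.2.2 ∧
      (∀ x y, p.1 x y = -p.1 y x) ∧ (∀ x y, p.2.1 x y = -p.2.1 y x) ∧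
      (∀ x y, p.2.2 x y = -p.2.2 y x) ∧
      (∀ x y, p.1 (J x) (J y) = p.1 x y) ∧
      (∀ x y, p.2.1 (J x) y = J (p.2.1 x y)) ∧
      (∀ x y, p.2.2 (J x) y = -J (p.2.2 x y)) := by
  have hσ := abelianInvolution_involutive hJ
  have hτ := complexInvolution_involutive hJ
  set σ := abelianInvolution J
  set τ := complexInvolution J
  have hμ : μ ∈ skew ℝ W := hskew
  set ν := σ.oddPart μ
  have hν : ν ∈ skew ℝ W := oddPart_mem hμ (abelianInvolution_mem_skew hμ)
  have hτν : τ ν ∈ skew ℝ W := complexInvolution_mem_skew hJ hν (apply_oddPart hσ μ)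
  refine ⟨(σ.evenPart μ, τ.evenPart ν, τ.oddPart ν),
    ⟨?_, evenPart_mem hμ (abelianInvolution_mem_skew hμ), evenPart_mem hν hτν,
      oddPart_mem hν hτν, abelianInvolution_eq_self_iff.1 (apply_evenPart hσ μ),
      (complexInvolution_eq_self_iff hJ).1 (apply_evenPart hτ ν),
      (complexInvolution_eq_neg_iff hJ).1 (apply_oddPart hτ ν)⟩, ?_⟩
  · rw [add_assoc, evenPart_add_oddPart, evenPart_add_oddPart]
  rintro ⟨q₁, q₂, q₃⟩ ⟨hsum, -, hq₂, hq₃, hab, hC, hanti⟩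
  have hσq₁ : σ q₁ = q₁ := abelianInvolution_eq_self_iff.2 hab
  have hσq₂ : σ q₂ = -q₂ := abelianInvolution_eq_neg_of_map_left hq₂ hJ hC
  have hσq₃ : σ q₃ = -q₃ :=
    abelianInvolution_eq_neg_of_map_left hq₃ (A := -J) (by simp [hJ]) hanti
  have hσq₂₃ : σ (q₂ + q₃) = -(q₂ + q₃) := by rw [map_add, hσq₂, hσq₃, neg_add]
  have hsum' : q₁ + (q₂ + q₃) = μ := by rw [hsum, add_assoc]
  have hq₂₃ : q₂ + q₃ = ν := eq_oddPart_of_add_eq hsum' hσq₁ hσq₂₃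
  have hτq₂ : τ q₂ = q₂ := (complexInvolution_eq_self_iff hJ).2 hC
  have hτq₃ : τ q₃ = -q₃ := (complexInvolution_eq_neg_iff hJ).2 hanti
  rw [eq_evenPart_of_add_eq hsum' hσq₁ hσq₂₃,
    eq_evenPart_of_add_eq hq₂₃ hτq₂ hτq₃, eq_oddPart_of_add_eq hq₂₃ hτq₂ hτq₃]

/-- every skew-symmetric bracket on `(W,J)` decomposes uniquely as
a sum of an abelian, a bi-invariant and an anti-bi-invariant bracket:
`V = V(ab) ⊕ V(ℂ) ⊕ V(anti-ℂ)`. -/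
theorem full_decomposition
    (W : Type*) [AddCommGroup W] [Module ℝ W] [FiniteDimensional ℝ W]
    (J : W →ₗ[ℝ] W) (hJ : ∀ x, J (J x) = -x)
    (μ : W →ₗ[ℝ] W →ₗ[ℝ] W) (hskew : ∀ x y, μ x y = -μ y x) :
    ∃! p : (W →ₗ[ℝ] W →ₗ[ℝ] W) × (W →ₗ[ℝ] W →ₗ[ℝ] W) × (W →ₗ[ℝ] W →ₗ[ℝ] W),
      μ = p.1 + p.2.1 + p.2.2 ∧
      (∀ x y, p.1 x y = -p.1 y x) ∧ (∀ x y, p.2.1 x y = -p.2.1 y x) ∧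
      (∀ x y, p.2.2 x y = -p.2.2 y x) ∧
      (∀ x y, p.1 (J x) (J y) = p.1 x y) ∧
      (∀ x y, p.2.1 (J x) y = J (p.2.1 x y)) ∧
      (∀ x y, p.2.2 (J x) y = -J (p.2.2 x y)) :=
  full_decomposition_general W J hJ μ hskew
end

section
/- Let 𝔤 be a real Lie algebra equipped with a linear map J with J² = −Id satisfying the anti-bi-invariance condition [JX,Y] = −J[X,Y] for all X,Y ∈ 𝔤. Then 𝔤 is 2-step nilpotent, i.e. [[𝔤,𝔤],𝔤] = 0. -/
/-!
Anti-invariance holds in both slots of the bracket, so `J` anticommutes with every inner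
derivation. Expanding `⁅J x, ⁅y, z⁆⁆` once by anti-invariance in the first slot and once by the
Leibniz rule gives `J ⁅x, ⁅y, z⁆⁆ = -J ⁅x, ⁅y, z⁆⁆`; without `2`-torsion this forces
`J ⁅x, ⁅y, z⁆⁆ = 0`, and `J` is injective since `J² = -1`.
-/

section AntiInvariant

variable {L F : Type*} [LieRing L] [FunLike F L L] [AddMonoidHomClass F L L] {J : F}

lemma lie_map_right_eq_neg_of_map_lie_left (hanti : ∀ x y : L, ⁅J x, y⁆ = -J ⁅x, y⁆)
    (x y : L) : ⁅x, J y⁆ = -J ⁅x, y⁆ := by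
  rw [← lie_skew, hanti, ← lie_skew x y, map_neg, neg_neg]

lemma neg_map_lie_lie_eq_of_antiInvariant (hanti : ∀ x y : L, ⁅J x, y⁆ = -J ⁅x, y⁆)
    (x y z : L) : -J ⁅x, ⁅y, z⁆⁆ = J ⁅x, ⁅y, z⁆⁆ := by
  have hright := lie_map_right_eq_neg_of_map_lie_left hanti
  calc -J ⁅x, ⁅y, z⁆⁆ = ⁅J x, ⁅y, z⁆⁆ := (hanti x _).symm
    _ = ⁅⁅J x, y⁆, z⁆ + ⁅y, ⁅J x, z⁆⁆ := leibniz_lie _ _ _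
    _ = J ⁅⁅x, y⁆, z⁆ + J ⁅y, ⁅x, z⁆⁆ := by
      rw [hanti, hanti, neg_lie, lie_neg, hanti, hright, neg_neg, neg_neg]
    _ = J ⁅x, ⁅y, z⁆⁆ := by rw [← map_add, ← leibniz_lie]

lemma lie_lie_eq_zero_of_antiInvariant [IsAddTorsionFree L] (hJ : ∀ x, J (J x) = -x)
    (hanti : ∀ x y : L, ⁅J x, y⁆ = -J ⁅x, y⁆) (x y z : L) : ⁅x, ⁅y, z⁆⁆ = 0 := by
  have hJ_zero : J ⁅x, ⁅y, z⁆⁆ = 0 :=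
    neg_eq_self.mp (neg_map_lie_lie_eq_of_antiInvariant hanti x y z)
  rw [← neg_eq_zero, ← hJ, hJ_zero, map_zero]

end AntiInvariant

theorem antiBiInvariant_twoStep_general
    (L : Type*) [LieRing L] [LieAlgebra ℝ L]
    (J : L →ₗ[ℝ] L) (hJ : ∀ x, J (J x) = -x)
    (hanti : ∀ x y : L, ⁅J x, y⁆ = -J ⁅x, y⁆) :
    ∀ x y z : L, ⁅x, ⁅y, z⁆⁆ = 0 := by
  have : IsAddTorsionFree L := .of_isTorsionFree ℝ L
  exact lie_lie_eq_zero_of_antiInvariant hJ hanti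

/-- a real Lie algebra with an anti-bi-invariant almost complex
structure is 2-step nilpotent. -/
theorem antiBiInvariant_twoStep
    (L : Type*) [LieRing L] [LieAlgebra ℝ L] [FiniteDimensional ℝ L]
    (J : L →ₗ[ℝ] L) (hJ : ∀ x, J (J x) = -x)
    (hanti : ∀ x y : L, ⁅J x, y⁆ = -J ⁅x, y⁆) :
    ∀ x y z : L, ⁅x, ⁅y, z⁆⁆ = 0 :=
  antiBiInvariant_twoStep_general L J hJ hanti
end

section
/- Let (𝔥, [·,·]_𝔥) be a real algebra given by a skew-symmetric bilinear map, and define on 𝔥 ⊗ ℂ the bracket [X⊗a, Y⊗b] := (conj(a)·conj(b)) [X,Y]_𝔥 (the anticomplexification). Then this bracket satisfies the Jacobi identity if and only if 𝔥 is a 2-step nilpotent Lie algebra. -/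
/-!
Every component of `antiBracket (antiBracket u v) w` is a signed sum of double brackets of
components of `u, v, w`, so 2-step nilpotency kills each term of the Jacobiator separately.
Conversely, on `(x, 0), (y, 0), (0, z)` the conjugation flips the sign of only the term
`[[x, y], z]` in the imaginary part, so instead of cancelling by the Jacobi identity of `𝔥`
the three terms add up to `-2 [[x, y], z]`.
-/

/-- The anticomplexification bracket on `𝔥 ⊗ ℂ`, where the complexification is
modelled as pairs `(x₁, x₂) ↔ x₁ + i x₂`:
`[X⊗a, Y⊗b] = conj(ab) [X,Y]`. -/
def antiBracket {H : Type*} [LieRing H] [LieAlgebra ℝ H] (u v : H × H) : H × H :=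
  (⁅u.1, v.1⁆ - ⁅u.2, v.2⁆, -⁅u.1, v.2⁆ - ⁅u.2, v.1⁆)

section
variable {H : Type*} [LieRing H] [LieAlgebra ℝ H]

theorem antiBracket_antiBracket_eq_zero_of_lie_lie_eq_zero
    (h : ∀ x y z : H, ⁅⁅x, y⁆, z⁆ = 0) (u v w : H × H) :
    antiBracket (antiBracket u v) w = 0 := by
  simp [antiBracket, sub_lie, h]

theorem snd_antiBracket_jacobiator_inl_inl_inr (x y z : H) :
    (antiBracket (antiBracket (x, 0) (y, 0)) (0, z) +
      antiBracket (antiBracket (y, 0) (0, z)) (x, 0) +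
      antiBracket (antiBracket (0, z) (x, 0)) (y, 0)).2 = -(2 : ℝ) • ⁅⁅x, y⁆, z⁆ := by
  have jacobi : ⁅⁅y, z⁆, x⁆ + ⁅⁅z, x⁆, y⁆ = -⁅⁅x, y⁆, z⁆ := by
    have := lie_jacobi x y z
    rw [← lie_skew x ⁅y, z⁆, ← lie_skew y ⁅z, x⁆, ← lie_skew z ⁅x, y⁆] at this
    linear_combination (norm := abel) -this
  simp only [antiBracket, Prod.snd_add, lie_zero, zero_lie, neg_zero, sub_zero, zero_sub, neg_lie,
    neg_neg]
  rw [add_assoc, jacobi]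
  module

end

theorem antiComplexification_jacobi_iff_twoStep_general
    (H : Type*) [LieRing H] [LieAlgebra ℝ H] :
    (∀ u v w : H × H,
        antiBracket (antiBracket u v) w + antiBracket (antiBracket v w) u +
          antiBracket (antiBracket w u) v = 0) ↔
      (∀ x y z : H, ⁅⁅x, y⁆, z⁆ = 0) := by
  constructor
  · intro hJ x y z
    have h := congrArg Prod.snd (hJ (x, 0) (y, 0) (0, z))
    rw [snd_antiBracket_jacobiator_inl_inl_inr] at h
    simpa using h
  · intro h u v w
    simp only [antiBracket_antiBracket_eq_zero_of_lie_lie_eq_zero h, add_zero]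

/-- the anticomplexification bracket of a real Lie algebra `𝔥`
satisfies the Jacobi identity if and only if `𝔥` is 2-step nilpotent. -/
theorem antiComplexification_jacobi_iff_twoStep
    (H : Type*) [LieRing H] [LieAlgebra ℝ H] [FiniteDimensional ℝ H] :
    (∀ u v w : H × H,
        antiBracket (antiBracket u v) w + antiBracket (antiBracket v w) u +
          antiBracket (antiBracket w u) v = 0) ↔
      (∀ x y z : H, ⁅⁅x, y⁆, z⁆ = 0) :=
  antiComplexification_jacobi_iff_twoStep_general H
end

section
/- Conversely, let 𝔤 = 𝔳 ⊕ 𝔷 be a real Lie algebra with [𝔤,𝔤] ⊆ 𝔷, [𝔤,𝔷] = 0, and let J be a linear map with J² = −Id preserving both 𝔳 and 𝔷 such that J⁻ (equal to J on 𝔷 and −J on 𝔳) is anti-bi-invariant. Then J is bi-invariant: [JX,Y] = J[X,Y] for all X,Y ∈ 𝔤. -/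
/-! `J⁻ + J` kills `𝔳` and maps `𝔷` into `𝔷`, so it takes values in the centre `𝔷`; hence
`[J⁻X, Y] = -[JX, Y]`. Since `[X, Y] ∈ 𝔷`, where `J⁻ = J`, anti-bi-invariance of `J⁻` reads
`-[JX, Y] = -J[X, Y]`. -/

theorem Submodule.apply_mem_of_codisjoint {R M : Type*} [Semiring R] [AddCommMonoid M]
    [Module R M] {v z : Submodule R M} (hvz : Codisjoint v z) (f : M →ₗ[R] M)
    (hv : ∀ x ∈ v, f x = 0) (hz : ∀ x ∈ z, f x ∈ z) (x : M) : f x ∈ z := by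
  obtain ⟨xv, hxv, xz, hxz, rfl⟩ := Submodule.mem_sup.mp (hvz.eq_top ▸ Submodule.mem_top (x := x))
  rw [map_add, hv xv hxv, zero_add]
  exact hz xz hxz

theorem biInvariant_of_Jminus_antiBiInvariant_general
    (L : Type*) [LieRing L] [LieAlgebra ℝ L]
    (J : L →ₗ[ℝ] L)
    (v z : Submodule ℝ L) (hcompl : IsCompl v z)
    (hJz : ∀ x ∈ z, J x ∈ z)
    (hder : ∀ x y : L, ⁅x, y⁆ ∈ z)
    (hcentral : ∀ x : L, ∀ w ∈ z, ⁅x, w⁆ = (0 : L))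
    (Jm : L →ₗ[ℝ] L)
    (hJmz : ∀ w ∈ z, Jm w = J w) (hJmv : ∀ w ∈ v, Jm w = -J w)
    (hanti : ∀ x y : L, ⁅Jm x, y⁆ = -Jm ⁅x, y⁆) :
    ∀ x y : L, ⁅J x, y⁆ = J ⁅x, y⁆ := by
  intro x y
  have hsum : (Jm + J) x ∈ z :=
    Submodule.apply_mem_of_codisjoint hcompl.codisjoint (Jm + J)
      (fun w hw ↦ by simp [hJmv w hw])
      (fun w hw ↦ by simpa [hJmz w hw, two_smul] using z.smul_mem 2 (hJz w hw)) x
  have hlie : ⁅Jm x, y⁆ + ⁅J x, y⁆ = 0 := by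
    rw [← add_lie, ← LinearMap.add_apply, ← lie_skew, hcentral y _ hsum, neg_zero]
  calc ⁅J x, y⁆ = -⁅Jm x, y⁆ := (neg_eq_of_add_eq_zero_right hlie).symm
    _ = Jm ⁅x, y⁆ := by rw [hanti, neg_neg]
    _ = J ⁅x, y⁆ := hJmz _ (hder x y)

/-- conversely, if `J⁻` (equal to `J` on `𝔷` and `-J` on `𝔳`) is
anti-bi-invariant on `𝔤 = 𝔳 ⊕ 𝔷` with `[𝔤,𝔤] ⊆ 𝔷` central, then `J` is
bi-invariant. -/
theorem biInvariant_of_Jminus_antiBiInvariant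
    (L : Type*) [LieRing L] [LieAlgebra ℝ L] [FiniteDimensional ℝ L]
    (J : L →ₗ[ℝ] L) (hJ : ∀ x, J (J x) = -x)
    (v z : Submodule ℝ L) (hcompl : IsCompl v z)
    (hJv : ∀ x ∈ v, J x ∈ v) (hJz : ∀ x ∈ z, J x ∈ z)
    (hder : ∀ x y : L, ⁅x, y⁆ ∈ z)
    (hcentral : ∀ x : L, ∀ w ∈ z, ⁅x, w⁆ = (0 : L))
    (Jm : L →ₗ[ℝ] L)
    (hJmz : ∀ w ∈ z, Jm w = J w) (hJmv : ∀ w ∈ v, Jm w = -J w)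
    (hanti : ∀ x y : L, ⁅Jm x, y⁆ = -Jm ⁅x, y⁆) :
    ∀ x y : L, ⁅J x, y⁆ = J ⁅x, y⁆ :=
  biInvariant_of_Jminus_antiBiInvariant_general L J v z hcompl hJz hder hcentral Jm hJmz hJmv hanti
end

section
/- Let W be a real vector space with complex structure J, decomposed as W = W₁ ⊕ W₂ with both summands J-invariant. Fix a linear involution φ of W that anti-commutes with J on W₁ (φJ = −Jφ on W₁) and equals the identity on W₂. For a bracket μ ∈ V_{pq} (i.e. μ(W₁,W₁) ⊆ W₂ and μ(W,W₂)=0), define μ⁻(X,Y) := μ(φX, φY). Then μ⁻ is bi-invariant with respect to J (μ⁻(JX,Y) = Jμ⁻(X,Y)) if and only if μ is anti-bi-invariant (μ(JX,Y) = −Jμ(X,Y)). -/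
/-!
The anticommutator `φ J + J φ` maps `W` into `W₂`: it vanishes on `W₁` and is `2 J` on `W₂`.
Since a skew bracket in `V_{pq}` vanishes as soon as one argument lies in `W₂`, this gives
`μ (φ (J x)) z = -μ (J (φ x)) z`, and then the substitution `x ↦ φ x`, `y ↦ φ y` (φ is an
involution) turns each of the two identities into the other.
-/

namespace LinearMap

variable {R M N : Type*} [CommRing R] [AddCommGroup M] [Module R M] [AddCommGroup N] [Module R N]

theorem eq_zero_of_mem_of_skew {μ : M →ₗ[R] M →ₗ[R] N}
    (hskew : ∀ x y, μ x y = -μ y x) {p : Submodule R M} (hμ : ∀ x, ∀ z ∈ p, μ x z = 0)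
    {z : M} (hz : z ∈ p) : μ z = 0 :=
  ext fun y => by rw [hskew, hμ y z hz, neg_zero, zero_apply]

end LinearMap

section Anticommutator

variable {R M : Type*} [Ring R] [AddCommGroup M] [Module R M]
  {W₁ W₂ : Submodule R M} {J φ : M →ₗ[R] M}

theorem anticommutator_apply_mem (hcodisj : Codisjoint W₁ W₂) (hJ2 : ∀ x ∈ W₂, J x ∈ W₂)
    (hφW₂ : ∀ x ∈ W₂, φ x = x) (hφJ : ∀ x ∈ W₁, φ (J x) = -J (φ x)) (x : M) :
    φ (J x) + J (φ x) ∈ W₂ := by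
  obtain ⟨a, b, ha, hb, rfl⟩ := Submodule.codisjoint_iff_exists_add_eq.mp hcodisj x
  have hJb := hJ2 b hb
  have hsplit : φ (J (a + b)) + J (φ (a + b)) = (φ (J a) + J (φ a)) + (J b + J b) := by
    simp only [map_add, hφW₂ _ hJb, hφW₂ _ hb]
    abel
  rw [hsplit, hφJ a ha, neg_add_cancel, zero_add]
  exact W₂.add_mem hJb hJb

theorem map_comp_apply_eq_neg_of_anticommute {P : Type*} [AddCommGroup P] [Module R P]
    {f : M →ₗ[R] P} (hcodisj : Codisjoint W₁ W₂) (hJ2 : ∀ x ∈ W₂, J x ∈ W₂)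
    (hφW₂ : ∀ x ∈ W₂, φ x = x) (hφJ : ∀ x ∈ W₁, φ (J x) = -J (φ x))
    (hf : ∀ z ∈ W₂, f z = 0) (x : M) :
    f (φ (J x)) = -f (J (φ x)) := by
  have h := hf _ (anticommutator_apply_mem hcodisj hJ2 hφW₂ hφJ x)
  rw [map_add] at h
  exact eq_neg_of_add_eq_zero_left h

end Anticommutator

theorem conjugation_biInvariant_iff_antiBiInvariant_general
    (W : Type*) [AddCommGroup W] [Module ℝ W]
    (J : W →ₗ[ℝ] W)
    (W₁ W₂ : Submodule ℝ W) (hcompl : IsCompl W₁ W₂)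
    (hJ2 : ∀ x ∈ W₂, J x ∈ W₂)
    (φ : W →ₗ[ℝ] W) (hφ2 : ∀ x, φ (φ x) = x)
    (hφW₂ : ∀ x ∈ W₂, φ x = x)
    (hφJ : ∀ x ∈ W₁, φ (J x) = -J (φ x))
    (μ : W →ₗ[ℝ] W →ₗ[ℝ] W) (hskew : ∀ x y, μ x y = -μ y x)
    (hμ2 : ∀ x : W, ∀ z ∈ W₂, μ x z = 0) :
    (∀ x y : W, μ (φ (J x)) (φ y) = J (μ (φ x) (φ y))) ↔
      (∀ x y : W, μ (J x) y = -J (μ x y)) := by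
  have key (x y : W) : μ (φ (J x)) y = -μ (J (φ x)) y := by
    rw [map_comp_apply_eq_neg_of_anticommute hcompl.codisjoint hJ2 hφW₂ hφJ
      (fun _ => LinearMap.eq_zero_of_mem_of_skew hskew hμ2), LinearMap.neg_apply]
  constructor
  · intro h x y
    have hxy := h (φ x) (φ y)
    rw [key, hφ2, hφ2] at hxy
    rw [← hxy, neg_neg]
  · intro h x y
    rw [key, h, neg_neg]

/-- the conjugation `μ⁻(X,Y) := μ(φX, φY)` interchanges
bi-invariant and anti-bi-invariant brackets in `V_{pq}`. -/
theorem conjugation_biInvariant_iff_antiBiInvariant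
    (W : Type*) [AddCommGroup W] [Module ℝ W] [FiniteDimensional ℝ W]
    (J : W →ₗ[ℝ] W) (hJ : ∀ x, J (J x) = -x)
    (W₁ W₂ : Submodule ℝ W) (hcompl : IsCompl W₁ W₂)
    (hJ1 : ∀ x ∈ W₁, J x ∈ W₁) (hJ2 : ∀ x ∈ W₂, J x ∈ W₂)
    (φ : W →ₗ[ℝ] W) (hφ2 : ∀ x, φ (φ x) = x)
    (hφW₂ : ∀ x ∈ W₂, φ x = x)
    (hφJ : ∀ x ∈ W₁, φ (J x) = -J (φ x))
    (hφ1 : ∀ x ∈ W₁, φ x ∈ W₁)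
    (μ : W →ₗ[ℝ] W →ₗ[ℝ] W) (hskew : ∀ x y, μ x y = -μ y x)
    (hμ1 : ∀ x ∈ W₁, ∀ y ∈ W₁, μ x y ∈ W₂)
    (hμ2 : ∀ x : W, ∀ z ∈ W₂, μ x z = 0) :
    (∀ x y : W, μ (φ (J x)) (φ y) = J (μ (φ x) (φ y))) ↔
      (∀ x y : W, μ (J x) y = -J (μ x y)) :=
  conjugation_biInvariant_iff_antiBiInvariant_general W J W₁ W₂ hcompl hJ2 φ hφ2 hφW₂ hφJ μ hskew
    hμ2
end

section
/- Let 𝔫 be a real nilpotent Lie algebra with inner product ⟨·,·⟩ and bi-invariant complex structure J ([JX,Y] = J[X,Y]) such that J is orthogonal (⟨JX,JY⟩ = ⟨X,Y⟩). Then the Ricci operator Ric, defined by ⟨Ric X, Y⟩ = −½ Σ ⟨[X,Xᵢ],Xⱼ⟩⟨[Y,Xᵢ],Xⱼ⟩ + ¼ Σ ⟨[Xᵢ,Xⱼ],X⟩⟨[Xᵢ,Xⱼ],Y⟩ for an orthonormal basis {Xᵢ}, commutes with J: Ric ∘ J = J ∘ Ric. -/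
open scoped RealInnerProductSpace

/-!
Since `J` is orthogonal, it suffices to show that the Ricci form is `J`-invariant. In its first
term `J` passes through the bracket and is absorbed by the inner product. In the second,
`⟪⁅bᵢ, bⱼ⁆, J x⟫ = ⟪⁅J⁻¹ bᵢ, bⱼ⁆, x⟫`, and for a linear map `f` the sum
`∑ᵢ ⟪f eᵢ, x⟫ ⟪f eᵢ, y⟫ = ⟪f* x, f* y⟫` does not depend on the orthonormal basis `e`.

The additive structures of `LieRing L` and of `NormedAddCommGroup L` are unrelated, so neither the
bracket nor `J` is known to be linear for the inner product space structure. This is recovered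
from the Gram forms: `⟪J x, J z⟫ = ⟪x, z⟫`, and `∑ᵢ ⟪⁅x, bᵢ⁆, ⁅z, bᵢ⁆⟫` is linear in `x` because
the Ricci operator exists.
-/

section GramForm

variable {E F : Type*} [NormedAddCommGroup E] [InnerProductSpace ℝ E]
  [NormedAddCommGroup F] [InnerProductSpace ℝ F]

/-- Each defect `f (x + y) - f x - f y`, `f (t • x) - t • f x` is orthogonal to the range of `f`,
in whose span it lies. -/
theorem isLinearMap_of_isLinearMap_inner_map_left {f : E → F}
    (hf : ∀ z, IsLinearMap ℝ fun x => ⟪f x, f z⟫) : IsLinearMap ℝ f where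
  map_add x y := by
    have hd : ∀ z, ⟪f (x + y) - f x - f y, f z⟫ = 0 := fun z => by
      simp only [inner_sub_left, (hf z).map_add]
      ring
    have hdd : ⟪f (x + y) - f x - f y, f (x + y) - f x - f y⟫ = 0 := by
      rw [inner_sub_right, inner_sub_right, hd, hd, hd, sub_zero, sub_zero]
    rw [← sub_eq_zero, sub_add_eq_sub_sub]
    exact inner_self_eq_zero.mp hdd
  map_smul t x := by
    have hd : ∀ z, ⟪f (t • x) - t • f x, f z⟫ = 0 := fun z => by
      simp only [inner_sub_left, real_inner_smul_left, (hf z).map_smul, smul_eq_mul]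
      ring
    have hdd : ⟪f (t • x) - t • f x, f (t • x) - t • f x⟫ = 0 := by
      rw [inner_sub_right, real_inner_smul_right, hd, hd, mul_zero, sub_zero]
    exact sub_eq_zero.mp (inner_self_eq_zero.mp hdd)

theorem isLinearMap_of_isLinearMap_sum_inner_map_left {ι : Type*} [Fintype ι] {f : ι → E → F}
    (hf : ∀ z, IsLinearMap ℝ fun x => ∑ i, ⟪f i x, f i z⟫) (i : ι) : IsLinearMap ℝ (f i) := by
  let g : E → PiLp 2 fun _ : ι => F := fun x => WithLp.toLp 2 fun i => f i x
  have hg : IsLinearMap ℝ g :=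
    isLinearMap_of_isLinearMap_inner_map_left fun z => by simpa [g, PiLp.inner_apply] using hf z
  exact ((PiLp.proj 2 (fun _ : ι => F) i).toLinearMap.comp (hg.mk' g)).isLinear

theorem isLinearMap_of_inner_map_map {f : E → F} (hf : ∀ x y, ⟪f x, f y⟫ = ⟪x, y⟫) :
    IsLinearMap ℝ f :=
  isLinearMap_of_isLinearMap_inner_map_left fun z => by
    simp only [hf]
    exact ⟨fun x y => inner_add_left x y z, fun t x => real_inner_smul_left x z t⟩

noncomputable def LinearIsometryEquiv.ofSurjectiveOfInner (f : E → F)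
    (hf : ∀ x y, ⟪f x, f y⟫ = ⟪x, y⟫) (hsurj : Function.Surjective f) : E ≃ₗᵢ[ℝ] F :=
  .ofSurjective (((isLinearMap_of_inner_map_map hf).mk' f).isometryOfInner hf) hsurj

end GramForm

section OrthonormalBasis

variable {E F ι : Type*} [NormedAddCommGroup E] [InnerProductSpace ℝ E]
  [NormedAddCommGroup F] [InnerProductSpace ℝ F] [Fintype ι]

theorem OrthonormalBasis.sum_inner_mul_inner' (b : OrthonormalBasis ι ℝ E) (x y : E) :
    ∑ i, ⟪x, b i⟫ * ⟪y, b i⟫ = ⟪x, y⟫ := by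
  simpa only [real_inner_comm y] using b.sum_inner_mul_inner x y

theorem OrthonormalBasis.sum_inner_map_mul_inner_map [FiniteDimensional ℝ E]
    [FiniteDimensional ℝ F] (b : OrthonormalBasis ι ℝ E) (f : E →ₗ[ℝ] F) (x y : F) :
    ∑ i, ⟪f (b i), x⟫ * ⟪f (b i), y⟫ = ⟪f.adjoint x, f.adjoint y⟫ := by
  calc ∑ i, ⟪f (b i), x⟫ * ⟪f (b i), y⟫
      = ∑ i, ⟪f.adjoint x, b i⟫ * ⟪f.adjoint y, b i⟫ := by
        simp only [LinearMap.adjoint_inner_left, real_inner_comm x, real_inner_comm y]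
    _ = ⟪f.adjoint x, f.adjoint y⟫ := b.sum_inner_mul_inner' _ _

end OrthonormalBasis

section Ricci

variable {L ι : Type*} [NormedAddCommGroup L] [InnerProductSpace ℝ L] [Bracket L L] [Fintype ι]

noncomputable def ricciForm (b : OrthonormalBasis ι ℝ L) (x y : L) : ℝ :=
  -(1/2) * ∑ i, ∑ j, ⟪⁅x, b i⁆, b j⟫ * ⟪⁅y, b i⁆, b j⟫
    + (1/4) * ∑ i, ∑ j, ⟪⁅b i, b j⁆, x⟫ * ⟪⁅b i, b j⁆, y⟫

theorem ricciForm_eq (b : OrthonormalBasis ι ℝ L) (x y : L) :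
    ricciForm b x y = -(1/2) * ∑ i, ⟪⁅x, b i⁆, ⁅y, b i⁆⟫
      + (1/4) * ∑ i, ∑ j, ⟪⁅b i, b j⁆, x⟫ * ⟪⁅b i, b j⁆, y⟫ := by
  simp only [ricciForm, b.sum_inner_mul_inner']

theorem isLinearMap_bracket_basis_left {R : L → L} (b : OrthonormalBasis ι ℝ L)
    (hR : ∀ x y, ⟪R x, y⟫ = ricciForm b x y) (j : ι) : IsLinearMap ℝ fun x : L => ⁅x, b j⁆ := by
  refine isLinearMap_of_isLinearMap_sum_inner_map_left (f := fun j (x : L) => ⁅x, b j⁆)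
    (fun z => ?_) j
  have hgram : (fun x => ∑ i, ⟪⁅x, b i⁆, ⁅z, b i⁆⟫) = fun x =>
      -2 * ⟪R z, x⟫ + (1/2) * ∑ i, ∑ j, ⟪⁅b i, b j⁆, z⟫ * ⟪⁅b i, b j⁆, x⟫ := by
    funext x
    have h := hR z x
    simp only [ricciForm_eq, real_inner_comm (⁅x, b _⁆ : L)] at h
    linarith
  rw [hgram]
  constructor
  · intro x y
    simp only [inner_add_right, mul_add, Finset.sum_add_distrib]
    ring
  · intro t x
    simp only [real_inner_smul_right, smul_eq_mul, mul_add, Finset.mul_sum]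
    ring_nf

theorem ricciForm_map_map [FiniteDimensional ℝ L] (b : OrthonormalBasis ι ℝ L) (J : L ≃ₗᵢ[ℝ] L)
    (hJ : ∀ x y, ⁅J x, y⁆ = J ⁅x, y⁆) (hlin : ∀ j, IsLinearMap ℝ fun x : L => ⁅x, b j⁆) (x y : L) :
    ricciForm b (J x) (J y) = ricciForm b x y := by
  have hfirst : ∀ i, ⟪⁅J x, b i⁆, ⁅J y, b i⁆⟫ = ⟪⁅x, b i⁆, ⁅y, b i⁆⟫ := fun i => by
    rw [hJ, hJ, J.inner_map_map]
  have hmove : ∀ a w u, ⟪⁅a, w⁆, J u⟫ = ⟪⁅J.symm a, w⁆, u⟫ := fun a w u => by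
    rw [← J.inner_map_map ⁅J.symm a, w⁆, ← hJ, J.apply_symm_apply]
  have hsecond : ∀ j, ∑ i, ⟪⁅b i, b j⁆, J x⟫ * ⟪⁅b i, b j⁆, J y⟫
      = ∑ i, ⟪⁅b i, b j⁆, x⟫ * ⟪⁅b i, b j⁆, y⟫ := fun j => by
    let adj := (hlin j).mk' _
    calc ∑ i, ⟪⁅b i, b j⁆, J x⟫ * ⟪⁅b i, b j⁆, J y⟫
        = ∑ i, ⟪adj (b.map J.symm i), x⟫ * ⟪adj (b.map J.symm i), y⟫ := by
          simp only [hmove, OrthonormalBasis.map_apply]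
          rfl
      _ = ⟪adj.adjoint x, adj.adjoint y⟫ := (b.map J.symm).sum_inner_map_mul_inner_map adj x y
      _ = ∑ i, ⟪⁅b i, b j⁆, x⟫ * ⟪⁅b i, b j⁆, y⟫ := (b.sum_inner_map_mul_inner_map adj x y).symm
  rw [ricciForm_eq, ricciForm_eq, Finset.sum_comm (f := fun i j => ⟪⁅b i, b j⁆, J x⟫ * _),
    Finset.sum_comm (f := fun i j => ⟪⁅b i, b j⁆, x⟫ * _)]
  simp only [hfirst, hsecond]

end Ricci

theorem ricci_commutes_with_biInvariant_J_general
    (L : Type*) [NormedAddCommGroup L] [InnerProductSpace ℝ L]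
    [FiniteDimensional ℝ L] [LieRing L] [LieAlgebra ℝ L]
    (ι : Type*) [Fintype ι] (b : OrthonormalBasis ι ℝ L)
    (J : L →ₗ[ℝ] L) (hJ : ∀ x, J (J x) = -x)
    (hJorth : ∀ x y : L, ⟪J x, J y⟫ = ⟪x, y⟫)
    (hbi : ∀ x y : L, ⁅J x, y⁆ = J ⁅x, y⁆)
    (Ric : L →ₗ[ℝ] L)
    (hRic : ∀ x y : L, ⟪Ric x, y⟫ =
        -(1/2) * ∑ i, ∑ j, ⟪⁅x, b i⁆, b j⟫ * ⟪⁅y, b i⁆, b j⟫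
        + (1/4) * ∑ i, ∑ j, ⟪⁅b i, b j⁆, x⟫ * ⟪⁅b i, b j⁆, y⟫) :
    ∀ x : L, Ric (J x) = J (Ric x) := by
  intro x
  have hJsurj : Function.Surjective J := fun z => ⟨J (-z), by rw [hJ, neg_neg]⟩
  refine ext_inner_right ℝ fun z => ?_
  obtain ⟨y, rfl⟩ := hJsurj z
  rw [hJorth, hRic, hRic]
  exact ricciForm_map_map b (.ofSurjectiveOfInner J hJorth hJsurj) hbi
    (isLinearMap_bracket_basis_left b hRic) x y

/-- for a nilpotent metric Lie algebra with an orthogonal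
bi-invariant complex structure `J`, the Ricci operator commutes with `J`. -/
theorem ricci_commutes_with_biInvariant_J
    (L : Type*) [NormedAddCommGroup L] [InnerProductSpace ℝ L]
    [FiniteDimensional ℝ L] [LieRing L] [LieAlgebra ℝ L]
    [LieRing.IsNilpotent L]
    (ι : Type*) [Fintype ι] (b : OrthonormalBasis ι ℝ L)
    (J : L →ₗ[ℝ] L) (hJ : ∀ x, J (J x) = -x)
    (hJorth : ∀ x y : L, ⟪J x, J y⟫ = ⟪x, y⟫)
    (hbi : ∀ x y : L, ⁅J x, y⁆ = J ⁅x, y⁆)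
    (Ric : L →ₗ[ℝ] L)
    (hRic : ∀ x y : L, ⟪Ric x, y⟫ =
        -(1/2) * ∑ i, ∑ j, ⟪⁅x, b i⁆, b j⟫ * ⟪⁅y, b i⁆, b j⟫
        + (1/4) * ∑ i, ∑ j, ⟪⁅b i, b j⁆, x⟫ * ⟪⁅b i, b j⁆, y⟫) :
    ∀ x : L, Ric (J x) = J (Ric x) :=
  ricci_commutes_with_biInvariant_J_general L ι b J hJ hJorth hbi Ric hRic
end
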